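/- Fix c ∈ ℝ and define f : ℝ² → ℝ³ by f(u,v) = (e^v cosh u, c, e^v(−(c/2) cosh u + sinh u)). Then, with g the Lorentzian Heisenberg metric: g_{f(u,v)}(f_u, f_u) = −e^{2v}, g_{f(u,v)}(f_v, f_v) = e^{2v}, and g_{f(u,v)}(f_u, f_v) = 0 for all (u,v) (so f is a conformal timelike immersion); moreover f(u,0) = β(u) := (cosh u, c, −(c/2) cosh u + sinh u), and the vector field V(u) = (0, 1, (cosh u)/2) satisfies g_{β(u)}(V, V) = 1 and g_{β(u)}(V, f_u(u,0)) = g_{β(u)}(V, f_v(u,0)) = 0. -/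

import Mathlib

/-!
Writing `f (u, v) = exp v • β₀ u + (0, c, 0)` with `β₀ u = (cosh u, 0, -(c/2) cosh u + sinh u)`,
the partials are `f_u = exp v • β₀' u` and `f_v = exp v • β₀ u`. Both have vanishing `y`-component
and `f` has constant `y = c`, so `ω` along the surface is `(c/2) X₁ + X₃`, giving `ω(β₀) = sinh u`,
`ω(β₀') = cosh u`; the metric relations then reduce to `cosh² u - sinh² u = 1`, scaled by
`exp (2 v)`. Along `β`, the vector `V` lies in the kernel of `ω`, so `g(V, ·)` is Euclidean there.
-/

/-- The contact form of the Lorentzian Heisenberg group at p = (x,y,z):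
ω_p(X) = (y/2)X₁ − (x/2)X₂ + X₃. -/
noncomputable def ωH (p X : ℝ × ℝ × ℝ) : ℝ := p.2.1 / 2 * X.1 - p.1 / 2 * X.2.1 + X.2.2

/-- The Lorentzian Heisenberg metric: g_p(X,Y) = X₁Y₁ + X₂Y₂ − ω_p(X)ω_p(Y). -/
noncomputable def gH (p X Y : ℝ × ℝ × ℝ) : ℝ := X.1 * Y.1 + X.2.1 * Y.2.1 - ωH p X * ωH p Y

open Real

lemma ωH_smul (p X : ℝ × ℝ × ℝ) (a : ℝ) : ωH p (a • X) = a * ωH p X := by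
  simp only [ωH, Prod.smul_fst, Prod.smul_snd, smul_eq_mul]; ring

lemma gH_smul_smul (p X Y : ℝ × ℝ × ℝ) (a b : ℝ) : gH p (a • X) (b • Y) = a * b * gH p X Y := by
  simp only [gH, ωH_smul, Prod.smul_fst, Prod.smul_snd, smul_eq_mul]; ring

lemma gH_of_ωH_eq_zero {p X : ℝ × ℝ × ℝ} (hX : ωH p X = 0) (Y : ℝ × ℝ × ℝ) :
    gH p X Y = X.1 * Y.1 + X.2.1 * Y.2.1 := by
  simp [gH, hX]

section ExpSmul

variable {E : Type*} [NormedAddCommGroup E] [NormedSpace ℝ E] {γ : ℝ → E} {γ' : E} {p : ℝ × ℝ}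

lemma hasFDerivAt_exp_snd_smul (hγ : HasDerivAt γ γ' p.1) :
    HasFDerivAt (fun q : ℝ × ℝ => exp q.2 • γ q.1)
      (exp p.2 • (ContinuousLinearMap.fst ℝ ℝ ℝ).smulRight γ'
        + (exp p.2 • ContinuousLinearMap.snd ℝ ℝ ℝ).smulRight (γ p.1)) p :=
  hasFDerivAt_snd.exp.smul (hγ.hasFDerivAt.comp p hasFDerivAt_fst)

lemma fderiv_exp_snd_smul_add_const_apply_fst (hγ : HasDerivAt γ γ' p.1) (a : E) :
    fderiv ℝ (fun q : ℝ × ℝ => exp q.2 • γ q.1 + a) p (1, 0) = exp p.2 • γ' := by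
  simp [fderiv_add_const, (hasFDerivAt_exp_snd_smul hγ).fderiv]

lemma fderiv_exp_snd_smul_add_const_apply_snd (hγ : HasDerivAt γ γ' p.1) (a : E) :
    fderiv ℝ (fun q : ℝ × ℝ => exp q.2 • γ q.1 + a) p (0, 1) = exp p.2 • γ p.1 := by
  simp [fderiv_add_const, (hasFDerivAt_exp_snd_smul hγ).fderiv]

end ExpSmul

noncomputable def verticalProfile (c u : ℝ) : ℝ × ℝ × ℝ := (cosh u, 0, -(c / 2) * cosh u + sinh u)

noncomputable def verticalProfileDeriv (c u : ℝ) : ℝ × ℝ × ℝ :=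
  (sinh u, 0, -(c / 2) * sinh u + cosh u)

lemma hasDerivAt_verticalProfile (c u : ℝ) :
    HasDerivAt (verticalProfile c) (verticalProfileDeriv c u) u :=
  (hasDerivAt_cosh u).prodMk ((hasDerivAt_const u 0).prodMk
    (((hasDerivAt_cosh u).const_mul _).add (hasDerivAt_sinh u)))

section Profile

variable {c : ℝ} {q : ℝ × ℝ × ℝ}

lemma ωH_verticalProfile (hq : q.2.1 = c) (u : ℝ) : ωH q (verticalProfile c u) = sinh u := by
  simp only [ωH, verticalProfile, hq]; ring

lemma ωH_verticalProfileDeriv (hq : q.2.1 = c) (u : ℝ) :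
    ωH q (verticalProfileDeriv c u) = cosh u := by
  simp only [ωH, verticalProfileDeriv, hq]; ring

lemma gH_verticalProfileDeriv_self (hq : q.2.1 = c) (u : ℝ) :
    gH q (verticalProfileDeriv c u) (verticalProfileDeriv c u) = -1 := by
  rw [gH, ωH_verticalProfileDeriv hq, ← cosh_sq_sub_sinh_sq u]
  simp only [verticalProfileDeriv]; ring

lemma gH_verticalProfile_self (hq : q.2.1 = c) (u : ℝ) :
    gH q (verticalProfile c u) (verticalProfile c u) = 1 := by
  rw [gH, ωH_verticalProfile hq, ← cosh_sq_sub_sinh_sq u]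
  simp only [verticalProfile]; ring

lemma gH_verticalProfileDeriv_verticalProfile (hq : q.2.1 = c) (u : ℝ) :
    gH q (verticalProfileDeriv c u) (verticalProfile c u) = 0 := by
  rw [gH, ωH_verticalProfile hq, ωH_verticalProfileDeriv hq]
  simp only [verticalProfile, verticalProfileDeriv]; ring

end Profile

/-- The surface f(u,v) = (e^v cosh u, c, e^v(−(c/2)cosh u + sinh u)) in the Lorentzian
Heisenberg group is a conformal timelike immersion (g(f_u,f_u) = −e^{2v},
g(f_v,f_v) = e^{2v}, g(f_u,f_v) = 0) containing the curve
β(u) = (cosh u, c, −(c/2)cosh u + sinh u), with unit spacelike normal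
V(u) = (0, 1, cosh u / 2) along β. -/
theorem heisenberg_vertical_plane (c : ℝ)
    (f : ℝ × ℝ → ℝ × ℝ × ℝ)
    (hf : ∀ p : ℝ × ℝ, f p = (Real.exp p.2 * Real.cosh p.1, c,
      Real.exp p.2 * (-(c / 2) * Real.cosh p.1 + Real.sinh p.1))) :
    (∀ p : ℝ × ℝ,
      gH (f p) (fderiv ℝ f p (1, 0)) (fderiv ℝ f p (1, 0)) = -Real.exp (2 * p.2) ∧
      gH (f p) (fderiv ℝ f p (0, 1)) (fderiv ℝ f p (0, 1)) = Real.exp (2 * p.2) ∧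
      gH (f p) (fderiv ℝ f p (1, 0)) (fderiv ℝ f p (0, 1)) = 0) ∧
    (∀ u : ℝ, f (u, 0) =
      (Real.cosh u, c, -(c / 2) * Real.cosh u + Real.sinh u)) ∧
    (∀ u : ℝ,
      gH (f (u, 0)) (0, 1, Real.cosh u / 2) (0, 1, Real.cosh u / 2) = 1 ∧
      gH (f (u, 0)) (0, 1, Real.cosh u / 2) (fderiv ℝ f (u, 0) (1, 0)) = 0 ∧
      gH (f (u, 0)) (0, 1, Real.cosh u / 2) (fderiv ℝ f (u, 0) (0, 1)) = 0) := by
  have hf_eq : f = fun q : ℝ × ℝ => exp q.2 • verticalProfile c q.1 + (0, c, 0) := by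
    funext q
    simp [hf, verticalProfile]
  have hc : ∀ p, (f p).2.1 = c := fun p => by simp [hf]
  have hfu : ∀ p : ℝ × ℝ, fderiv ℝ f p (1, 0) = exp p.2 • verticalProfileDeriv c p.1 :=
    fun p => hf_eq ▸ fderiv_exp_snd_smul_add_const_apply_fst (hasDerivAt_verticalProfile c p.1) _
  have hfv : ∀ p : ℝ × ℝ, fderiv ℝ f p (0, 1) = exp p.2 • verticalProfile c p.1 :=
    fun p => hf_eq ▸ fderiv_exp_snd_smul_add_const_apply_snd (hasDerivAt_verticalProfile c p.1) _
  have hV : ∀ u, ωH (f (u, 0)) (0, 1, cosh u / 2) = 0 := fun u => by simp [ωH, hf]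
  refine ⟨fun p => ?_, fun u => by simp [hf], fun u => ?_⟩
  · have hexp : exp p.2 * exp p.2 = exp (2 * p.2) := by rw [← exp_add, two_mul]
    simp only [hfu, hfv, gH_smul_smul, gH_verticalProfileDeriv_self (hc p),
      gH_verticalProfile_self (hc p), gH_verticalProfileDeriv_verticalProfile (hc p), hexp]
    refine ⟨by ring, by ring, by ring⟩
  · simp [gH_of_ωH_eq_zero (hV u), hfu, hfv, verticalProfile, verticalProfileDeriv]
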